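/- Fix λ_1,…,λ_{m−1} ∈ ℂ and R_1,…,R_{m−1} > 0 such that S = {z ∈ ℂ : |z| ≤ 1 and |z − λ_j| ≥ R_j for j = 1,…,m−1} is nonempty. For every finitely supported family of complex coefficients p = (p_{kl}) and every ε > 0 there exists C(p,ε) ≥ 0 such that: for every unital C*-algebra A, every δ ≥ 0, and every a ∈ A with ‖a‖ ≤ 1, ‖a a* − a* a‖ ≤ δ, and each a − λ_j·1 invertible with ‖(a − λ_j·1)^{−1}‖ ≤ R_j^{−1}, both ‖p(a,a*)·p(a,a*)* − 1‖ and ‖p(a,a*)*·p(a,a*) − 1‖ are at most max_{z∈S} | |p(z,z̄)|² − 1 | + ε + C(p,ε)·δ. -/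

import Mathlib

open scoped ComplexConjugate

/-- Evaluation of a finitely supported coefficient family `p = (p_{kl})` at an element `a`
of a star `ℂ`-algebra: `p(a,a*) = ∑ p_{kl} a^k (a*)^l`. -/
noncomputable def polyEvalA {A : Type*} [Ring A] [StarRing A] [Algebra ℂ A]
    (p : (ℕ × ℕ) →₀ ℂ) (a : A) : A :=
  p.sum fun kl c => c • (a ^ kl.1 * star a ^ kl.2)

/-- The function `z ↦ p(z, z̄) = ∑ p_{kl} z^k conj(z)^l`. -/
noncomputable def polyEvalC (p : (ℕ × ℕ) →₀ ℂ) (z : ℂ) : ℂ :=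
  p.sum fun kl c => c * z ^ kl.1 * (conj z) ^ kl.2

/-!
For normal `a` the estimate holds with `ε = C = 0`: the continuous functional calculus writes both
`p p* - 1` and `p* p - 1` as `(|p|² - 1)(a)`, and the resolvent bounds confine the spectrum of `a`
to `S`. Almost normal elements are reduced to normal ones by an ultraproduct: if no `δ₀ > 0` made
the estimate hold with `C = 0` for commutators of norm `≤ δ₀`, counterexamples with commutators of
norm `≤ 1/(n+1)` would define, in the ultraproduct of their C⋆-algebras along a free ultrafilter,
a normal element with the same norm and resolvent bounds, whose defect is the ultralimit of theirs.
For `δ > δ₀` the crude bound `‖p(a,a*)‖² + 1` is absorbed by `C = ((∑ |p_{kl}|)² + 1) / δ₀`.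
-/

open Filter Topology Finset
open scoped ENNReal

noncomputable section

section Spectrum

variable {𝕜 B : Type*} [NormedField 𝕜] [NormedRing B] [NormedAlgebra 𝕜 B] [CompleteSpace B]

theorem spectrum.le_norm_sub_of_norm_inverse_le {b : B} {μ z : 𝕜} {r : ℝ}
    (hu : IsUnit (b - algebraMap 𝕜 B μ)) (hinv : ‖Ring.inverse (b - algebraMap 𝕜 B μ)‖ ≤ r⁻¹)
    (hz : z ∈ spectrum 𝕜 b) : r ≤ ‖z - μ‖ := by
  by_contra! hlt
  have hr : 0 < r := (norm_nonneg _).trans_lt hlt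
  set u := b - algebraMap 𝕜 B μ
  set w := (z - μ) • Ring.inverse u
  have hw : ‖w‖ < 1 := calc
    ‖w‖ ≤ ‖z - μ‖ * r⁻¹ := (norm_smul_le _ _).trans (by gcongr)
    _ < r * r⁻¹ := by gcongr
    _ = 1 := mul_inv_cancel₀ hr.ne'
  have hfactor : algebraMap 𝕜 B z - b = -(u * (1 - w)) := by
    rw [mul_sub, mul_one, mul_smul_comm, Ring.mul_inverse_cancel u hu]
    simp only [u, Algebra.algebraMap_eq_smul_one, sub_smul]
    abel
  exact spectrum.mem_iff.1 hz (hfactor ▸ (hu.mul (Units.oneSub w hw).isUnit).neg)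

end Spectrum

def discMinusBalls {κ : Type*} (lam : κ → ℂ) (R : κ → ℝ) : Set ℂ :=
  {z | ‖z‖ ≤ 1 ∧ ∀ j, R j ≤ ‖z - lam j‖}

theorem isCompact_discMinusBalls {κ : Type*} (lam : κ → ℂ) (R : κ → ℝ) :
    IsCompact (discMinusBalls lam R) := by
  have hset : discMinusBalls lam R =
      Metric.closedBall 0 1 ∩ ⋂ j, {z : ℂ | R j ≤ ‖z - lam j‖} := by
    ext z; simp [discMinusBalls]
  rw [hset]
  exact (isCompact_closedBall 0 1).inter_right
    (isClosed_iInter fun j => isClosed_le continuous_const (by fun_prop))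

theorem spectrum_subset_discMinusBalls {B : Type*} [CStarAlgebra B] {κ : Type*}
    {lam : κ → ℂ} {R : κ → ℝ} {b : B} (hb : ‖b‖ ≤ 1)
    (hu : ∀ j, IsUnit (b - algebraMap ℂ B (lam j)))
    (hinv : ∀ j, ‖Ring.inverse (b - algebraMap ℂ B (lam j))‖ ≤ (R j)⁻¹) :
    spectrum ℂ b ⊆ discMinusBalls lam R := by
  intro z hz
  have : Nontrivial B :=
    not_subsingleton_iff_nontrivial.1 fun _ => by simp [spectrum.of_subsingleton] at hz
  exact ⟨(spectrum.norm_le_norm_of_mem hz).trans hb,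
    fun j => spectrum.le_norm_sub_of_norm_inverse_le (hu j) (hinv j) hz⟩

section Polynomial

theorem map_polyEvalA {R S : Type*} [Ring R] [StarRing R] [Algebra ℂ R]
    [Ring S] [StarRing S] [Algebra ℂ S] (f : R →⋆ₐ[ℂ] S) (p : (ℕ × ℕ) →₀ ℂ) (a : R) :
    f (polyEvalA p a) = polyEvalA p (f a) := by
  simp only [polyEvalA, map_finsuppSum, map_smul, map_mul, map_pow, map_star]

@[fun_prop]
theorem continuous_polyEvalC (p : (ℕ × ℕ) →₀ ℂ) : Continuous (polyEvalC p) := by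
  unfold polyEvalC Finsupp.sum
  fun_prop

variable {B : Type*} [CStarAlgebra B]

theorem polyEvalA_eq_cfc (p : (ℕ × ℕ) →₀ ℂ) (b : B) [IsStarNormal b] :
    polyEvalA p b = cfc (polyEvalC p) b := by
  have hmonomial (kl : ℕ × ℕ) :
      b ^ kl.1 * star b ^ kl.2 = cfc (fun z : ℂ => z ^ kl.1 * conj z ^ kl.2) b := by
    rw [cfc_mul _ _ b (by fun_prop) (by fun_prop), cfc_pow_id b, cfc_pow _ _ b (by fun_prop)]
    exact congrArg (fun y => b ^ kl.1 * y ^ kl.2) (cfc_star_id (R := ℂ) b).symm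
  have hsum := cfc_sum (fun kl (z : ℂ) => p kl * z ^ kl.1 * conj z ^ kl.2) b p.support
  rw [Finset.sum_fn] at hsum
  unfold polyEvalA polyEvalC Finsupp.sum
  rw [hsum]
  refine Finset.sum_congr rfl fun kl _ => ?_
  dsimp only
  rw [hmonomial, ← cfc_smul _ _ b (by fun_prop)]
  exact cfc_congr fun z _ => by simp only [smul_eq_mul]; ring

theorem norm_polyEvalA_le (p : (ℕ × ℕ) →₀ ℂ) {b : B} (hb : ‖b‖ ≤ 1) :
    ‖polyEvalA p b‖ ≤ p.sum fun _ c => ‖c‖ := by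
  rcases subsingleton_or_nontrivial B with hB | hB
  · rw [Subsingleton.elim (polyEvalA p b) 0, norm_zero]
    exact Finset.sum_nonneg fun _ _ => norm_nonneg _
  refine (norm_sum_le _ _).trans (Finset.sum_le_sum fun kl _ => ?_)
  have hpow (x : B) (hx : ‖x‖ ≤ 1) (k : ℕ) : ‖x ^ k‖ ≤ 1 :=
    (norm_pow_le x k).trans (pow_le_one₀ (norm_nonneg x) hx)
  calc ‖p kl • (b ^ kl.1 * star b ^ kl.2)‖
      ≤ ‖p kl‖ * (‖b ^ kl.1‖ * ‖star b ^ kl.2‖) :=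
        (norm_smul_le _ _).trans (by gcongr; exact norm_mul_le _ _)
    _ ≤ ‖p kl‖ * (1 * 1) := by
        gcongr
        · exact hpow b hb _
        · exact hpow _ (by rwa [norm_star]) _
    _ = ‖p kl‖ := by ring

theorem norm_mul_sub_one_le (x y : B) : ‖x * y - 1‖ ≤ ‖x‖ * ‖y‖ + 1 := by
  nontriviality B
  exact (norm_sub_le _ _).trans (by rw [norm_one]; gcongr; exact norm_mul_le _ _)

def unitarityDefect (p : (ℕ × ℕ) →₀ ℂ) (S : Set ℂ) : ℝ :=
  sSup ((fun z => |‖polyEvalC p z‖ ^ 2 - 1|) '' S)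

theorem unitarityDefect_nonneg (p : (ℕ × ℕ) →₀ ℂ) (S : Set ℂ) : 0 ≤ unitarityDefect p S :=
  Real.sSup_nonneg (by rintro _ ⟨z, -, rfl⟩; exact abs_nonneg _)

/-- For normal `b`, both `p p* - 1` and `p* p - 1` are `cfc` of the real function `|p|² - 1`. -/
theorem norm_polyEvalA_mul_star_sub_one_le (p : (ℕ × ℕ) →₀ ℂ) (b : B) [IsStarNormal b]
    {S : Set ℂ} (hS : IsCompact S) (hb : spectrum ℂ b ⊆ S) :
    ‖polyEvalA p b * star (polyEvalA p b) - 1‖ ≤ unitarityDefect p S ∧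
    ‖star (polyEvalA p b) * polyEvalA p b - 1‖ ≤ unitarityDefect p S := by
  set g : ℂ → ℂ := fun z => ((‖polyEvalC p z‖ ^ 2 - 1 : ℝ) : ℂ)
  have hg (z : ℂ) : polyEvalC p z * star (polyEvalC p z) - 1 = g z := by
    simp [g, Complex.mul_conj, Complex.normSq_eq_norm_sq]
  have hpa : polyEvalA p b = cfc (polyEvalC p) b := polyEvalA_eq_cfc p b
  have hstar : star (polyEvalA p b) = cfc (fun z => star (polyEvalC p z)) b := by
    rw [hpa, cfc_star]
  have hone : (1 : B) = cfc (fun _ : ℂ => (1 : ℂ)) b := by rw [cfc_const_one ℂ b]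
  have hleft : polyEvalA p b * star (polyEvalA p b) - 1 = cfc g b := by
    rw [hstar, hpa, hone, ← cfc_mul _ _ b (by fun_prop) (by fun_prop),
      ← cfc_sub _ _ b (by fun_prop) (by fun_prop)]
    exact cfc_congr fun z _ => hg z
  have hright : star (polyEvalA p b) * polyEvalA p b - 1 = cfc g b := by
    rw [hstar, hpa, hone, ← cfc_mul _ _ b (by fun_prop) (by fun_prop),
      ← cfc_sub _ _ b (by fun_prop) (by fun_prop)]
    exact cfc_congr fun z _ => by rw [mul_comm]; exact hg z
  have hbound : ‖cfc g b‖ ≤ unitarityDefect p S :=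
    norm_cfc_le (unitarityDefect_nonneg p S) fun z hz => by
      rw [Complex.norm_real, Real.norm_eq_abs]
      exact le_csSup ((hS.image (by fun_prop)).bddAbove) ⟨z, hb hz, rfl⟩
  exact ⟨hleft ▸ hbound, hright ▸ hbound⟩

end Polynomial

theorem completeSpace_of_approx_lift {E F : Type*} [SeminormedAddCommGroup E] [CompleteSpace E]
    [SeminormedAddCommGroup F] (f : E →+ F) (hf : ∀ x, ‖f x‖ ≤ ‖x‖)
    (hlift : ∀ y : F, ∀ η > 0, ∃ x, ‖f x - y‖ = 0 ∧ ‖x‖ ≤ ‖y‖ + η) : CompleteSpace F := by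
  refine Metric.complete_of_convergent_controlled_sequences (fun n => (1 / 2) ^ n)
    (fun n => by positivity) fun u hu => ?_
  have hstep (n : ℕ) : ∃ x, ‖f x - (u (n + 1) - u n)‖ = 0 ∧ ‖x‖ ≤ 2 * (1 / 2) ^ n := by
    obtain ⟨x, hx, hxle⟩ := hlift (u (n + 1) - u n) ((1 / 2) ^ n) (by positivity)
    have hun := hu n (n + 1) n n.le_succ le_rfl
    rw [dist_eq_norm] at hun
    exact ⟨x, hx, by linarith⟩
  choose x hx hxle using hstep
  have hsum : Summable x :=
    Summable.of_norm_bounded (summable_geometric_two.mul_left 2) hxle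
  -- the partial sums of the lifted increments track `u` up to inseparability
  have htrack (n : ℕ) : ‖u n - (u 0 + f (∑ k ∈ range n, x k))‖ = 0 := by
    induction n with
    | zero => simp
    | succ n ih =>
      have hsplit : u (n + 1) - (u 0 + f (∑ k ∈ range (n + 1), x k)) =
          (u n - (u 0 + f (∑ k ∈ range n, x k))) - (f (x n) - (u (n + 1) - u n)) := by
        rw [sum_range_succ, map_add]; abel
      rw [hsplit]
      exact le_antisymm ((norm_sub_le _ _).trans (by rw [ih, hx n, add_zero])) (norm_nonneg _)
  refine ⟨u 0 + f (∑' n, x n), tendsto_iff_norm_sub_tendsto_zero.2 ?_⟩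
  have hpartial : Tendsto (fun n => ‖∑ k ∈ range n, x k - ∑' n, x n‖) atTop (𝓝 0) := by
    simpa using (hsum.hasSum.tendsto_sum_nat.sub_const (∑' n, x n)).norm
  refine squeeze_zero (fun _ => norm_nonneg _) (fun n => ?_) hpartial
  calc ‖u n - (u 0 + f (∑' n, x n))‖
      ≤ ‖u n - (u 0 + f (∑ k ∈ range n, x k))‖ + ‖f (∑ k ∈ range n, x k) - f (∑' n, x n)‖ := by
        refine (norm_sub_le_norm_sub_add_norm_sub _ (u 0 + f (∑ k ∈ range n, x k)) _).trans_eq ?_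
        congr 2; abel
    _ ≤ ‖∑ k ∈ range n, x k - ∑' n, x n‖ := by rw [htrack, zero_add, ← map_sub]; exact hf _

namespace Ultraproduct

variable {ι : Type*} {A : ι → Type*} [∀ i, CStarAlgebra (A i)] (U : Ultrafilter ι)

def ultraNorm (x : lp A ∞) : ℝ := limsup (fun i => ‖x i‖) U

theorem tendsto_ultraNorm (x : lp A ∞) : Tendsto (fun i => ‖x i‖) U (𝓝 (ultraNorm U x)) := by
  have hbdd : ∀ i, ‖x i‖ ∈ Set.Icc (0 : ℝ) ‖x‖ := fun i =>
    ⟨norm_nonneg _, lp.norm_apply_le_norm ENNReal.top_ne_zero x i⟩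
  obtain ⟨l, -, hl⟩ := isCompact_Icc.ultrafilter_le_nhds (U.map fun i => ‖x i‖)
    (le_principal_iff.2 (mem_map.2 (univ_mem' hbdd)))
  rwa [ultraNorm, (show Tendsto (fun i => ‖x i‖) U (𝓝 l) from hl).limsup_eq]

variable {U} in
theorem ultraNorm_eq_of_tendsto {x : lp A ∞} {l : ℝ} (h : Tendsto (fun i => ‖x i‖) U (𝓝 l)) :
    ultraNorm U x = l :=
  tendsto_nhds_unique (tendsto_ultraNorm U x) h

theorem ultraNorm_le_norm (x : lp A ∞) : ultraNorm U x ≤ ‖x‖ :=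
  le_of_tendsto' (tendsto_ultraNorm U x) fun i => lp.norm_apply_le_norm ENNReal.top_ne_zero x i

theorem ultraNorm_zero : ultraNorm U (0 : lp A ∞) = 0 :=
  ultraNorm_eq_of_tendsto (by simp)

theorem ultraNorm_neg (x : lp A ∞) : ultraNorm U (-x) = ultraNorm U x :=
  ultraNorm_eq_of_tendsto (by simpa using tendsto_ultraNorm U x)

theorem ultraNorm_add_le (x y : lp A ∞) : ultraNorm U (x + y) ≤ ultraNorm U x + ultraNorm U y :=
  le_of_tendsto_of_tendsto' (tendsto_ultraNorm U _)
    ((tendsto_ultraNorm U x).add (tendsto_ultraNorm U y)) fun i => norm_add_le (x i) (y i)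

theorem ultraNorm_mul_le (x y : lp A ∞) : ultraNorm U (x * y) ≤ ultraNorm U x * ultraNorm U y :=
  le_of_tendsto_of_tendsto' (tendsto_ultraNorm U _)
    ((tendsto_ultraNorm U x).mul (tendsto_ultraNorm U y)) fun i => by
      simpa [lp.infty_coeFn_mul] using norm_mul_le (x i) (y i)

theorem ultraNorm_smul (c : ℂ) (x : lp A ∞) : ultraNorm U (c • x) = ‖c‖ * ultraNorm U x :=
  ultraNorm_eq_of_tendsto (by simpa [norm_smul] using (tendsto_ultraNorm U x).const_mul ‖c‖)

theorem ultraNorm_star (x : lp A ∞) : ultraNorm U (star x) = ultraNorm U x :=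
  ultraNorm_eq_of_tendsto (by simpa using tendsto_ultraNorm U x)

theorem ultraNorm_star_mul_self (x : lp A ∞) :
    ultraNorm U (star x * x) = ultraNorm U x * ultraNorm U x :=
  ultraNorm_eq_of_tendsto (by
    simpa [lp.infty_coeFn_mul, CStarRing.norm_star_mul_self] using
      (tendsto_ultraNorm U x).mul (tendsto_ultraNorm U x))

/-- Truncating `x` outside the `U`-large set where `‖x i‖` is close to its limit. -/
theorem exists_ultraNorm_sub_eq_zero_norm_le (x : lp A ∞) {η : ℝ} (hη : 0 < η) :
    ∃ y : lp A ∞, ultraNorm U (x - y) = 0 ∧ ‖y‖ ≤ ultraNorm U x + η := by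
  set T := {i | ‖x i‖ < ultraNorm U x + η}
  have hT : T ∈ U := (tendsto_ultraNorm U x).eventually_lt_const (lt_add_of_pos_right _ hη)
  have hc : 0 ≤ ultraNorm U x + η :=
    add_nonneg (ge_of_tendsto' (tendsto_ultraNorm U x) fun _ => norm_nonneg _) hη.le
  have hy (i : ι) : ‖if i ∈ T then x i else 0‖ ≤ ultraNorm U x + η := by
    split_ifs with hi
    · exact le_of_lt hi
    · simpa using hc
  refine ⟨⟨fun i => if i ∈ T then x i else 0, memℓp_infty ⟨_, Set.forall_mem_range.2 hy⟩⟩,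
    ultraNorm_eq_of_tendsto ?_, lp.norm_le_of_forall_le hc hy⟩
  refine tendsto_const_nhds.congr' (eventually_of_mem hT fun i (hi : i ∈ T) => ?_)
  show 0 = ‖x i - (if i ∈ T then x i else 0)‖
  simp [hi]

-- `lp A ∞` is only made a unital ring when every `‖(1 : A i)‖ = 1`.
variable [∀ i, Nontrivial (A i)]

variable (A) in
/-- `ℓ^∞(A)` with the seminorm `ultraNorm U`; its separation quotient is the ultraproduct. -/
def _root_.PreUltraproduct (_U : Ultrafilter ι) : Type _ := lp A ∞

instance : Ring (PreUltraproduct A U) := inferInstanceAs (Ring (lp A ∞))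
instance : StarRing (PreUltraproduct A U) := inferInstanceAs (StarRing (lp A ∞))
instance : Algebra ℂ (PreUltraproduct A U) := inferInstanceAs (Algebra ℂ (lp A ∞))
instance : StarModule ℂ (PreUltraproduct A U) := inferInstanceAs (StarModule ℂ (lp A ∞))

def toPre : lp A ∞ ≃⋆ₐ[ℂ] PreUltraproduct A U := StarAlgEquiv.refl (R := ℂ) (A := lp A ∞)

instance : SeminormedAddCommGroup (PreUltraproduct A U) :=
  AddGroupSeminorm.toSeminormedAddCommGroup
    { toFun := fun x => ultraNorm U ((toPre U).symm x)
      map_zero' := ultraNorm_zero U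
      neg' := fun _ => ultraNorm_neg U _
      add_le' := fun _ _ => ultraNorm_add_le U _ _ }

instance : SeminormedRing (PreUltraproduct A U) :=
  { (inferInstance : SeminormedAddCommGroup (PreUltraproduct A U)),
    (inferInstance : Ring (PreUltraproduct A U)) with
    norm_mul_le x y := ultraNorm_mul_le U ((toPre U).symm x) ((toPre U).symm y) }

instance : NormedAlgebra ℂ (PreUltraproduct A U) where
  norm_smul_le c x := (ultraNorm_smul U c ((toPre U).symm x)).le

instance : CompleteSpace (PreUltraproduct A U) := by
  refine completeSpace_of_approx_lift (AddMonoidHom.mk' (toPre U) (map_add _))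
    (ultraNorm_le_norm U) fun y η hη => ?_
  obtain ⟨x, hx, hxle⟩ := exists_ultraNorm_sub_eq_zero_norm_le U ((toPre U).symm y) hη
  refine ⟨x, ?_, hxle⟩
  rw [← neg_sub, norm_neg]
  exact hx

variable (A) in
def _root_.Ultraproduct (U : Ultrafilter ι) : Type _ := SeparationQuotient (PreUltraproduct A U)

instance : NormedRing (Ultraproduct A U) :=
  inferInstanceAs (NormedRing (SeparationQuotient (PreUltraproduct A U)))
instance : NormedAlgebra ℂ (Ultraproduct A U) :=
  inferInstanceAs (NormedAlgebra ℂ (SeparationQuotient (PreUltraproduct A U)))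
instance : CompleteSpace (Ultraproduct A U) :=
  inferInstanceAs (CompleteSpace (SeparationQuotient (PreUltraproduct A U)))

def ofPre (x : PreUltraproduct A U) : Ultraproduct A U := SeparationQuotient.mk x

instance : Star (Ultraproduct A U) where
  star := SeparationQuotient.lift (fun x => ofPre U (star x)) fun x y h =>
    SeparationQuotient.mk_eq_mk.2 <| Metric.inseparable_iff.2 <| by
      rw [Metric.inseparable_iff, dist_eq_norm] at h
      rw [dist_eq_norm, ← star_sub]
      exact (ultraNorm_star U _).trans h

theorem ofPre_surjective : Function.Surjective (ofPre U (A := A)) :=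
  SeparationQuotient.surjective_mk

instance : StarRing (Ultraproduct A U) where
  star_involutive := (ofPre_surjective U).forall.2 fun x => congrArg (ofPre U) (star_star x)
  star_mul := (ofPre_surjective U).forall₂.2 fun x y => congrArg (ofPre U) (star_mul x y)
  star_add := (ofPre_surjective U).forall₂.2 fun x y => congrArg (ofPre U) (star_add x y)

instance : StarModule ℂ (Ultraproduct A U) where
  star_smul c := (ofPre_surjective U).forall.2 fun x => congrArg (ofPre U) (star_smul c x)

instance : CStarRing (Ultraproduct A U) where
  norm_mul_self_le := (ofPre_surjective U).forall.2 fun x =>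
    (ultraNorm_star_mul_self U ((toPre U).symm x)).ge

instance : CStarAlgebra (Ultraproduct A U) where

def mk : lp A ∞ →⋆ₐ[ℂ] Ultraproduct A U where
  toFun x := ofPre U (toPre U x)
  map_one' := rfl
  map_mul' _ _ := rfl
  map_zero' := rfl
  map_add' _ _ := rfl
  commutes' _ := rfl
  map_star' _ := rfl

theorem norm_mk (x : lp A ∞) : ‖mk U x‖ = ultraNorm U x := rfl

def _root_.lp.evalStarAlgHom (i : ι) : lp A ∞ →⋆ₐ[ℂ] A i where
  toFun x := x i
  map_one' := congr_fun lp.infty_coeFn_one i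
  map_mul' x y := congr_fun (lp.infty_coeFn_mul x y) i
  map_zero' := rfl
  map_add' _ _ := rfl
  commutes' _ := rfl
  map_star' _ := rfl

@[simp]
theorem _root_.lp.evalStarAlgHom_apply (i : ι) (x : lp A ∞) : lp.evalStarAlgHom i x = x i := rfl

theorem isStarNormal_mk (x : lp A ∞)
    (hx : Tendsto (fun i => ‖x i * star (x i) - star (x i) * x i‖) U (𝓝 0)) :
    IsStarNormal (mk U x) := by
  refine ⟨(sub_eq_zero.1 (norm_eq_zero.1 ?_)).symm⟩
  rw [← map_star, ← map_mul, ← map_mul, ← map_sub, norm_mk]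
  refine ultraNorm_eq_of_tendsto (hx.congr fun i => ?_)
  simp [← lp.evalStarAlgHom_apply, map_sub, map_mul, map_star]

theorem isUnit_mk_and_norm_inverse_le (x : lp A ∞) {r : ℝ} (hu : ∀ i, IsUnit (x i))
    (hr : ∀ i, ‖Ring.inverse (x i)‖ ≤ r) :
    IsUnit (mk U x) ∧ ‖Ring.inverse (mk U x)‖ ≤ r := by
  set y : lp A ∞ := ⟨fun i => Ring.inverse (x i), memℓp_infty ⟨r, Set.forall_mem_range.2 hr⟩⟩
  have hxy : x * y = 1 := by
    ext i; simp [y, lp.infty_coeFn_mul, Ring.mul_inverse_cancel _ (hu i)]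
  have hyx : y * x = 1 := by
    ext i; simp [y, lp.infty_coeFn_mul, Ring.inverse_mul_cancel _ (hu i)]
  set v := Units.map (mk U : lp A ∞ →⋆ₐ[ℂ] Ultraproduct A U).toMonoidHom ⟨x, y, hxy, hyx⟩
  refine ⟨⟨v, rfl⟩, ?_⟩
  rw [show mk U x = v from rfl, Ring.inverse_unit,
    show ((v⁻¹ : _ˣ) : Ultraproduct A U) = mk U y from rfl, norm_mk]
  exact le_of_tendsto' (tendsto_ultraNorm U y) hr

end Ultraproduct

open Ultraproduct in
theorem eventually_norm_polyEvalA_mul_star_sub_one_lt {ι : Type*} (U : Ultrafilter ι)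
    {A : ι → Type*} [∀ i, CStarAlgebra (A i)] [∀ i, Nontrivial (A i)] {κ : Type*}
    (lam : κ → ℂ) (R : κ → ℝ) (p : (ℕ × ℕ) →₀ ℂ) {ε : ℝ} (hε : 0 < ε)
    (a : ∀ i, A i) (ha : ∀ i, ‖a i‖ ≤ 1)
    (hcomm : Tendsto (fun i => ‖a i * star (a i) - star (a i) * a i‖) U (𝓝 0))
    (hu : ∀ i j, IsUnit (a i - algebraMap ℂ (A i) (lam j)))
    (hinv : ∀ i j, ‖Ring.inverse (a i - algebraMap ℂ (A i) (lam j))‖ ≤ (R j)⁻¹) :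
    ∀ᶠ i in U,
      ‖polyEvalA p (a i) * star (polyEvalA p (a i)) - 1‖ <
        unitarityDefect p (discMinusBalls lam R) + ε ∧
      ‖star (polyEvalA p (a i)) * polyEvalA p (a i) - 1‖ <
        unitarityDefect p (discMinusBalls lam R) + ε := by
  set x : lp A ∞ := ⟨a, memℓp_infty ⟨1, Set.forall_mem_range.2 ha⟩⟩
  have hcoord (i : ι) (y : lp A ∞) : y i = lp.evalStarAlgHom i y := rfl
  have hres (j : κ) : IsUnit (mk U x - algebraMap ℂ _ (lam j)) ∧
      ‖Ring.inverse (mk U x - algebraMap ℂ _ (lam j))‖ ≤ (R j)⁻¹ := by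
    have hshift (i : ι) : (x - algebraMap ℂ _ (lam j)) i = a i - algebraMap ℂ (A i) (lam j) := by
      rw [hcoord, map_sub, AlgHomClass.commutes]; rfl
    have := isUnit_mk_and_norm_inverse_le U (x - algebraMap ℂ _ (lam j))
      (fun i => hshift i ▸ hu i j) fun i => hshift i ▸ hinv i j
    rwa [map_sub, AlgHomClass.commutes] at this
  have := isStarNormal_mk U x hcomm
  have hx : ‖mk U x‖ ≤ 1 := (norm_mk U x).trans_le
    ((ultraNorm_le_norm U x).trans (lp.norm_le_of_forall_le zero_le_one ha))
  have hspec : spectrum ℂ (mk U x) ⊆ discMinusBalls lam R :=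
    spectrum_subset_discMinusBalls hx (fun j => (hres j).1) fun j => (hres j).2
  obtain ⟨hleft, hright⟩ :=
    norm_polyEvalA_mul_star_sub_one_le p (mk U x) (isCompact_discMinusBalls lam R) hspec
  have htransfer (y : lp A ∞) (hy : ‖mk U y‖ ≤ unitarityDefect p (discMinusBalls lam R)) :
      ∀ᶠ i in U, ‖y i‖ < unitarityDefect p (discMinusBalls lam R) + ε :=
    (tendsto_ultraNorm U y).eventually_lt_const (by rw [norm_mk] at hy; linarith)
  rw [← map_polyEvalA, ← map_star, ← map_mul, ← map_one (Ultraproduct.mk U), ← map_sub]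
    at hleft hright
  filter_upwards [htransfer _ hleft, htransfer _ hright] with i hi₁ hi₂
  rw [hcoord, map_sub, map_mul, map_star, map_one, map_polyEvalA] at hi₁ hi₂
  exact ⟨hi₁, hi₂⟩

theorem exists_pos_norm_polyEvalA_mul_star_sub_one_le.{u} {κ : Type*} (lam : κ → ℂ) (R : κ → ℝ)
    (p : (ℕ × ℕ) →₀ ℂ) {ε : ℝ} (hε : 0 < ε) :
    ∃ δ₀ > 0, ∀ (A : Type u) [CStarAlgebra A] (a : A), ‖a‖ ≤ 1 →
      ‖a * star a - star a * a‖ ≤ δ₀ →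
      (∀ j, IsUnit (a - algebraMap ℂ A (lam j))) →
      (∀ j, ‖Ring.inverse (a - algebraMap ℂ A (lam j))‖ ≤ (R j)⁻¹) →
        ‖polyEvalA p a * star (polyEvalA p a) - 1‖ ≤
          unitarityDefect p (discMinusBalls lam R) + ε ∧
        ‖star (polyEvalA p a) * polyEvalA p a - 1‖ ≤
          unitarityDefect p (discMinusBalls lam R) + ε := by
  have hD := unitarityDefect_nonneg p (discMinusBalls lam R)
  by_contra! hcon
  choose A _ a ha hcomm hu hinv hfail using fun n : ℕ => hcon (1 / (n + 1)) Nat.one_div_pos_of_nat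
  have hnontrivial (n : ℕ) : Nontrivial (A n) := by
    refine not_subsingleton_iff_nontrivial.1 fun _ => ?_
    have hzero (y : A n) : ‖y‖ = 0 := by rw [Subsingleton.elim y 0, norm_zero]
    have := hfail n (by rw [hzero]; linarith)
    rw [hzero] at this
    linarith
  have hcomm' : Tendsto (fun n => ‖a n * star (a n) - star (a n) * a n‖) (hyperfilter ℕ) (𝓝 0) :=
    (squeeze_zero (fun _ => norm_nonneg _) hcomm tendsto_one_div_add_atTop_nhds_zero_nat).mono_left
      (hyperfilter_le_cofinite.trans Nat.cofinite_eq_atTop.le)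
  obtain ⟨n, hn₁, hn₂⟩ := (eventually_norm_polyEvalA_mul_star_sub_one_lt (hyperfilter ℕ) lam R p hε
    a ha hcomm' hu hinv).exists
  linarith [hfail n hn₁.le]

theorem stmt6.{u} (m : ℕ) (lam : Fin m → ℂ) (R : Fin m → ℝ) (hR : ∀ j, 0 < R j)
    (S : Set ℂ) (hS : S = {z : ℂ | ‖z‖ ≤ 1 ∧ ∀ j, R j ≤ ‖z - lam j‖})
    (hSne : S.Nonempty)
    (p : (ℕ × ℕ) →₀ ℂ) (ε : ℝ) (hε : 0 < ε) :
    ∃ C : ℝ, 0 ≤ C ∧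
      ∀ (A : Type u) [CStarAlgebra A], ∀ δ : ℝ, 0 ≤ δ →
        ∀ a : A, ‖a‖ ≤ 1 → ‖a * star a - star a * a‖ ≤ δ →
          (∀ j, IsUnit (a - algebraMap ℂ A (lam j))) →
          (∀ j, ‖Ring.inverse (a - algebraMap ℂ A (lam j))‖ ≤ (R j)⁻¹) →
            ‖polyEvalA p a * star (polyEvalA p a) - 1‖ ≤
                sSup ((fun z => |‖polyEvalC p z‖ ^ 2 - 1|) '' S) + ε + C * δ ∧
            ‖star (polyEvalA p a) * polyEvalA p a - 1‖ ≤
                sSup ((fun z => |‖polyEvalC p z‖ ^ 2 - 1|) '' S) + ε + C * δ := by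
  have hsup : sSup ((fun z => |‖polyEvalC p z‖ ^ 2 - 1|) '' S) =
      unitarityDefect p (discMinusBalls lam R) := by rw [hS]; rfl
  rw [hsup]
  obtain ⟨δ₀, hδ₀, hsmall⟩ := exists_pos_norm_polyEvalA_mul_star_sub_one_le lam R p hε
  set N := p.sum fun _ c => ‖c‖
  have hN : 0 ≤ N := Finset.sum_nonneg fun _ _ => norm_nonneg _
  have hD₀ := unitarityDefect_nonneg p (discMinusBalls lam R)
  refine ⟨(N ^ 2 + 1) / δ₀, by positivity, fun A _ δ hδ a ha hcomm hu hinv => ?_⟩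
  rcases le_or_gt δ δ₀ with hle | hlt
  · have : 0 ≤ (N ^ 2 + 1) / δ₀ * δ := by positivity
    obtain ⟨h₁, h₂⟩ := hsmall A a ha (hcomm.trans hle) hu hinv
    exact ⟨by linarith, by linarith⟩
  have hlarge : N ^ 2 + 1 ≤ (N ^ 2 + 1) / δ₀ * δ := by
    rw [div_mul_eq_mul_div, le_div_iff₀ hδ₀]; gcongr
  have hpa : ‖polyEvalA p a‖ ≤ N := norm_polyEvalA_le p ha
  have hcrude (x y : A) (hx : ‖x‖ ≤ N) (hy : ‖y‖ ≤ N) : ‖x * y - 1‖ ≤ N ^ 2 + 1 :=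
    (norm_mul_sub_one_le x y).trans (by nlinarith [norm_nonneg x, norm_nonneg y])
  exact ⟨by linarith [hcrude _ _ hpa ((norm_star _).trans_le hpa)],
    by linarith [hcrude _ _ ((norm_star _).trans_le hpa) hpa]⟩
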